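/- There exists a finite point set P such that the uniform 2D-monotone spanning graph of P of minimum cost and the uniform 2D-monotone spanning graph of P with the fewest edges are attained at different rotation angles and are different graphs. -/

import Mathlib

open scoped BigOperators

noncomputable section

/-- A point in the Euclidean plane. -/
abbrev Pt : Type := EuclideanSpace ℝ (Fin 2)

noncomputable instance : DecidableEq Pt := Classical.decEq _

/-- A real sequence is monotone (increasing or decreasing) on indices `0..t`. -/
def MonoTo (f : ℕ → ℝ) (t : ℕ) : Prop :=
  (∀ i j : ℕ, i ≤ j → j ≤ t → f i ≤ f j) ∨ (∀ i j : ℕ, i ≤ j → j ≤ t → f j ≤ f i)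

/-- A point sequence is `y`-monotone on indices `0..t`. -/
def YMono (q : ℕ → Pt) (t : ℕ) : Prop := MonoTo (fun i => q i 1) t

/-- A point sequence is `xy`-monotone on indices `0..t`. -/
def XYMono (q : ℕ → Pt) (t : ℕ) : Prop :=
  MonoTo (fun i => q i 0) t ∧ MonoTo (fun i => q i 1) t

/-- `E` is the edge set of a geometric graph with vertex set `P` (no loops). -/
def IsGraphOn (P : Finset Pt) (E : Finset (Sym2 Pt)) : Prop :=
  ∀ p q : Pt, s(p, q) ∈ E → p ∈ P ∧ q ∈ P ∧ p ≠ q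

/-- `w 0, …, w t` is a path of `E` from `a` to `b`. -/
def IsPathBetween (E : Finset (Sym2 Pt)) (w : ℕ → Pt) (t : ℕ) (a b : Pt) : Prop :=
  w 0 = a ∧ w t = b ∧ ∀ i : ℕ, i < t → s(w i, w (i + 1)) ∈ E

/-- `a` and `b` are connected by a `y`-monotone path of `E`. -/
def ConnYMono (E : Finset (Sym2 Pt)) (a b : Pt) : Prop :=
  ∃ w t, IsPathBetween E w t a b ∧ YMono w t

/-- `a` and `b` are connected by an `xy`-monotone path of `E`. -/
def ConnXYMono (E : Finset (Sym2 Pt)) (a b : Pt) : Prop :=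
  ∃ w t, IsPathBetween E w t a b ∧ XYMono w t

/-- Cost of a geometric graph: sum of Euclidean lengths of edges. -/
def cost (E : Finset (Sym2 Pt)) : ℝ :=
  ∑ e ∈ E, Sym2.lift ⟨fun p q => dist p q, fun p q => dist_comm p q⟩ e

/-- Closed axis-aligned rectangle with corners `p` and `q`. -/
def Rect (p q : Pt) : Set Pt :=
  {z | min (p 0) (q 0) ≤ z 0 ∧ z 0 ≤ max (p 0) (q 0) ∧
       min (p 1) (q 1) ≤ z 1 ∧ z 1 ≤ max (p 1) (q 1)}

/-- `p` and `q` are rectangularly visible in `P`. -/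
def RectVisible (P : Finset Pt) (p q : Pt) : Prop :=
  ∀ r ∈ P, r ∈ Rect p q → r = p ∨ r = q

/-- Adjacency in the rectangle of influence graph of `P`. -/
def RIGAdj (P : Finset Pt) (a b : Pt) : Prop :=
  a ∈ P ∧ b ∈ P ∧ a ≠ b ∧ RectVisible P a b

/-- A spanning graph on vertex set `V` in which every root in `R` is connected
to every vertex by a `y`-monotone path. -/
def RootedSpan (V R : Finset Pt) (E : Finset (Sym2 Pt)) : Prop :=
  IsGraphOn V E ∧ ∀ r ∈ R, ∀ p ∈ V, ConnYMono E r p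

/-- `E` is a minimum-cost rooted `y`-monotone spanning graph of `V` with roots `R`. -/
def IsMinRooted (V R : Finset Pt) (E : Finset (Sym2 Pt)) : Prop :=
  RootedSpan V R E ∧ ∀ E', RootedSpan V R E' → cost E ≤ cost E'

/-- First rotated coordinate (rotation of axes by angle `θ`). -/
def rotX (θ : ℝ) (z : Pt) : ℝ := Real.cos θ * z 0 + Real.sin θ * z 1

/-- Second rotated coordinate (rotation of axes by angle `θ`). -/
def rotY (θ : ℝ) (z : Pt) : ℝ := -Real.sin θ * z 0 + Real.cos θ * z 1

/-- Closed rectangle with corners `p`, `q` w.r.t. the axes rotated by `θ`. -/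
def RectRot (θ : ℝ) (p q : Pt) : Set Pt :=
  {z | min (rotX θ p) (rotX θ q) ≤ rotX θ z ∧ rotX θ z ≤ max (rotX θ p) (rotX θ q) ∧
       min (rotY θ p) (rotY θ q) ≤ rotY θ z ∧ rotY θ z ≤ max (rotY θ p) (rotY θ q)}

/-- Points of `P` rectangularly visible from `p` w.r.t. the axes rotated by `θ`. -/
def RVrot (θ : ℝ) (P : Finset Pt) (p : Pt) : Set Pt :=
  {q | q ∈ P ∧ q ≠ p ∧ ∀ r ∈ P, r ∈ RectRot θ p q → r = p ∨ r = q}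

/-- Adjacency in the rectangle of influence graph of `P` w.r.t. the axes rotated by `θ`. -/
def RIGrotAdj (θ : ℝ) (P : Finset Pt) (a b : Pt) : Prop :=
  a ∈ P ∧ b ∈ P ∧ a ≠ b ∧ ∀ r ∈ P, r ∈ RectRot θ a b → r = a ∨ r = b


/-! The set `{A, B, C, D, E}` with `A = (1,3)`, `B = (5,4)`, `C = (7,3)`, `D = (2,4)`, `E = (2,3)` has
right angles at `E` (in `AED`) and at `D` (in `BDE`), both with axis-parallel legs. By Thales, a
rotated rectangle with diagonal `pq` lies in the disc with diameter `pq`; this makes `AE`, `DE`, `BD`,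
`BC` edges of every `G_θ` and keeps `A`, `D` out of the rectangle of `CE`. So either `CE` is an edge,
or `B` blocks it; the latter forces a non-axis-parallel rotation, for which the right-angle vertices
`E` and `D` no longer block `AD` and `BE`. Hence every `G_θ` contains `G_0` (five edges, cost
`10 + √5`) or `G_{π/4}` (six edges, cost `5 + √2 + √5 + √10`), and both occur: the fewest edges are
attained only by `G_0`, which is strictly costlier than `G_{π/4}`. -/

open Real

lemma min_le_and_le_max_iff {α : Type*} [CommRing α] [LinearOrder α] [IsStrictOrderedRing α]
    {u v x : α} : (min u v ≤ x ∧ x ≤ max u v) ↔ (x - u) * (x - v) ≤ 0 := by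
  wlog h : u ≤ v generalizing u v
  · rw [min_comm, max_comm, mul_comm]; exact this (le_of_not_ge h)
  rw [min_eq_left h, max_eq_right h]
  constructor
  · rintro ⟨h1, h2⟩
    exact mul_nonpos_of_nonneg_of_nonpos (sub_nonneg.2 h1) (sub_nonpos.2 h2)
  · intro hp
    constructor
    · by_contra! hx; nlinarith
    · by_contra! hx; nlinarith

lemma mem_Rect_iff {p q z : Pt} : z ∈ Rect p q ↔
    (z 0 - p 0) * (z 0 - q 0) ≤ 0 ∧ (z 1 - p 1) * (z 1 - q 1) ≤ 0 := by
  simp only [Rect, Set.mem_ofPred_eq, ← min_le_and_le_max_iff, and_assoc]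

lemma mem_RectRot_iff {θ : ℝ} {p q z : Pt} : z ∈ RectRot θ p q ↔
    (rotX θ z - rotX θ p) * (rotX θ z - rotX θ q) ≤ 0 ∧
    (rotY θ z - rotY θ p) * (rotY θ z - rotY θ q) ≤ 0 := by
  simp only [RectRot, Set.mem_ofPred_eq, ← min_le_and_le_max_iff, and_assoc]

lemma RectRot_eq_Rect {θ : ℝ} (h : sin θ * cos θ = 0) (p q : Pt) : RectRot θ p q = Rect p q := by
  have hcs := sin_sq_add_cos_sq θ
  ext z
  rw [mem_RectRot_iff, mem_Rect_iff]
  set X := (z 0 - p 0) * (z 0 - q 0)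
  set Y := (z 1 - p 1) * (z 1 - q 1)
  rcases mul_eq_zero.1 h with hs | hc
  · rw [hs] at hcs
    have hX : (rotX θ z - rotX θ p) * (rotX θ z - rotX θ q) = X := by
      simp only [rotX, hs]; linear_combination X * hcs
    have hY : (rotY θ z - rotY θ p) * (rotY θ z - rotY θ q) = Y := by
      simp only [rotY, hs]; linear_combination Y * hcs
    rw [hX, hY]
  · rw [hc] at hcs
    have hX : (rotX θ z - rotX θ p) * (rotX θ z - rotX θ q) = Y := by
      simp only [rotX, hc]; linear_combination Y * hcs
    have hY : (rotY θ z - rotY θ p) * (rotY θ z - rotY θ q) = X := by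
      simp only [rotY, hc]; linear_combination X * hcs
    rw [hX, hY, and_comm]

lemma mem_RectRot_pi_div_four_iff {p q z : Pt} : z ∈ RectRot (π / 4) p q ↔
    (z 0 + z 1 - (p 0 + p 1)) * (z 0 + z 1 - (q 0 + q 1)) ≤ 0 ∧
    (z 1 - z 0 - (p 1 - p 0)) * (z 1 - z 0 - (q 1 - q 0)) ≤ 0 := by
  have h2 : √2 ^ 2 = 2 := sq_sqrt zero_le_two
  have hX : (rotX (π / 4) z - rotX (π / 4) p) * (rotX (π / 4) z - rotX (π / 4) q) =
      (z 0 + z 1 - (p 0 + p 1)) * (z 0 + z 1 - (q 0 + q 1)) / 2 := by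
    simp only [rotX, cos_pi_div_four, sin_pi_div_four]
    linear_combination (z 0 + z 1 - (p 0 + p 1)) * (z 0 + z 1 - (q 0 + q 1)) / 4 * h2
  have hY : (rotY (π / 4) z - rotY (π / 4) p) * (rotY (π / 4) z - rotY (π / 4) q) =
      (z 1 - z 0 - (p 1 - p 0)) * (z 1 - z 0 - (q 1 - q 0)) / 2 := by
    simp only [rotY, cos_pi_div_four, sin_pi_div_four]
    linear_combination (z 1 - z 0 - (p 1 - p 0)) * (z 1 - z 0 - (q 1 - q 0)) / 4 * h2
  rw [mem_RectRot_iff, hX, hY, div_le_iff₀ two_pos, div_le_iff₀ two_pos, zero_mul]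

/-- Thales: in every orientation, the rectangle with diagonal `pq` lies in the disc with
diameter `pq`. -/
lemma inner_nonpos_of_mem_RectRot {θ : ℝ} {p q z : Pt} (h : z ∈ RectRot θ p q) :
    (z 0 - p 0) * (z 0 - q 0) + (z 1 - p 1) * (z 1 - q 1) ≤ 0 := by
  obtain ⟨hx, hy⟩ := mem_RectRot_iff.1 h
  have hsum : (rotX θ z - rotX θ p) * (rotX θ z - rotX θ q) +
      (rotY θ z - rotY θ p) * (rotY θ z - rotY θ q) =
      (z 0 - p 0) * (z 0 - q 0) + (z 1 - p 1) * (z 1 - q 1) := by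
    simp only [rotX, rotY]
    linear_combination ((z 0 - p 0) * (z 0 - q 0) + (z 1 - p 1) * (z 1 - q 1)) *
      sin_sq_add_cos_sq θ
  linarith

/-- The vertex `z` of a right angle `azb` with axis-parallel legs lies in the rectangle of `a`
and `b` only for axis-parallel rotations. -/
lemma sin_mul_cos_eq_zero_of_mem_RectRot {θ : ℝ} {z a b : Pt} (ha : a 1 = z 1) (hb : b 0 = z 0)
    (ha' : a 0 ≠ z 0) (hb' : b 1 ≠ z 1) (h : z ∈ RectRot θ a b) : sin θ * cos θ = 0 := by
  obtain ⟨hx, hy⟩ := mem_RectRot_iff.1 h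
  have hxy : (sin θ * cos θ) * ((a 0 - z 0) * (b 1 - z 1)) = 0 := by
    simp only [rotX, rotY, ha, hb] at hx hy
    nlinarith
  simpa [sub_ne_zero.2 ha', sub_ne_zero.2 hb'] using hxy

lemma RIGrotAdj_of_forall_inner_pos {P : Finset Pt} {a b : Pt} (ha : a ∈ P) (hb : b ∈ P)
    (hab : a ≠ b)
    (h : ∀ r ∈ P, r ≠ a → r ≠ b → 0 < (r 0 - a 0) * (r 0 - b 0) + (r 1 - a 1) * (r 1 - b 1))
    (θ : ℝ) : RIGrotAdj θ P a b := by
  refine ⟨ha, hb, hab, fun r hr hrect => ?_⟩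
  by_contra! hne
  exact (h r hr hne.1 hne.2).not_ge (inner_nonpos_of_mem_RectRot hrect)

lemma cost_mono {E F : Finset (Sym2 Pt)} (h : E ⊆ F) : cost E ≤ cost F :=
  Finset.sum_le_sum_of_subset_of_nonneg h fun e _ _ => by
    induction e using Sym2.ind with
    | _ x y => exact dist_nonneg (x := x) (y := y)

lemma dist_toLp_fin_two (x y : Fin 2 → ℝ) :
    dist (WithLp.toLp 2 x : Pt) (WithLp.toLp 2 y) = √((x 0 - y 0) ^ 2 + (x 1 - y 1) ^ 2) := by
  simp [EuclideanSpace.dist_eq, Fin.sum_univ_two, Real.dist_eq, sq_abs]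

def pA : Pt := !₂[1, 3]
def pB : Pt := !₂[5, 4]
def pC : Pt := !₂[7, 3]
def pD : Pt := !₂[2, 4]
def pE : Pt := !₂[2, 3]

def ptSet : Finset Pt := {pA, pB, pC, pD, pE}

def graph0 : Finset (Sym2 Pt) :=
  {s(pA, pE), s(pB, pC), s(pB, pD), s(pC, pE), s(pD, pE)}

def graphPiDivFour : Finset (Sym2 Pt) :=
  {s(pA, pD), s(pA, pE), s(pB, pC), s(pB, pD), s(pB, pE), s(pD, pE)}

lemma RIGrotAdj_pA_pE (θ : ℝ) : RIGrotAdj θ ptSet pA pE :=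
  RIGrotAdj_of_forall_inner_pos (by simp [ptSet]) (by simp [ptSet]) (by simp [pA, pE])
    (by simp [ptSet, pA, pB, pC, pD, pE]; norm_num) θ

lemma RIGrotAdj_pD_pE (θ : ℝ) : RIGrotAdj θ ptSet pD pE :=
  RIGrotAdj_of_forall_inner_pos (by simp [ptSet]) (by simp [ptSet]) (by simp [pD, pE])
    (by simp [ptSet, pA, pB, pC, pD, pE]; norm_num) θ

lemma RIGrotAdj_pB_pD (θ : ℝ) : RIGrotAdj θ ptSet pB pD :=
  RIGrotAdj_of_forall_inner_pos (by simp [ptSet]) (by simp [ptSet]) (by simp [pB, pD])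
    (by simp [ptSet, pA, pB, pC, pD, pE]; norm_num) θ

lemma RIGrotAdj_pB_pC (θ : ℝ) : RIGrotAdj θ ptSet pB pC :=
  RIGrotAdj_of_forall_inner_pos (by simp [ptSet]) (by simp [ptSet]) (by simp [pB, pC])
    (by simp [ptSet, pA, pB, pC, pD, pE]; norm_num) θ

lemma RIGrotAdj_pC_pE {θ : ℝ} (hB : pB ∉ RectRot θ pC pE) : RIGrotAdj θ ptSet pC pE := by
  refine ⟨by simp [ptSet], by simp [ptSet], by simp [pC, pE], fun r hr hrect => ?_⟩
  simp only [ptSet, Finset.mem_insert, Finset.mem_singleton] at hr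
  rcases hr with rfl | rfl | rfl | rfl | rfl
  · have := inner_nonpos_of_mem_RectRot hrect
    norm_num [pA, pC, pE] at this
  · exact absurd hrect hB
  · exact Or.inl rfl
  · have := inner_nonpos_of_mem_RectRot hrect
    norm_num [pD, pC, pE] at this
  · exact Or.inr rfl

lemma sin_mul_cos_ne_zero_of_pB_mem {θ : ℝ} (hB : pB ∈ RectRot θ pC pE) :
    sin θ * cos θ ≠ 0 := by
  intro h
  rw [RectRot_eq_Rect h, mem_Rect_iff] at hB
  norm_num [pB, pC, pE] at hB

lemma RIGrotAdj_pA_pD {θ : ℝ} (hθ : sin θ * cos θ ≠ 0) : RIGrotAdj θ ptSet pA pD := by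
  refine ⟨by simp [ptSet], by simp [ptSet], by simp [pA, pD], fun r hr hrect => ?_⟩
  simp only [ptSet, Finset.mem_insert, Finset.mem_singleton] at hr
  rcases hr with rfl | rfl | rfl | rfl | rfl
  · exact Or.inl rfl
  · have := inner_nonpos_of_mem_RectRot hrect
    norm_num [pA, pB, pD] at this
  · have := inner_nonpos_of_mem_RectRot hrect
    norm_num [pA, pC, pD] at this
  · exact Or.inr rfl
  · exact absurd (sin_mul_cos_eq_zero_of_mem_RectRot (by simp [pA, pE]) (by simp [pD, pE])
      (by simp [pA, pE]) (by simp [pD, pE]) hrect) hθ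

lemma RIGrotAdj_pB_pE {θ : ℝ} (hθ : sin θ * cos θ ≠ 0) : RIGrotAdj θ ptSet pB pE := by
  refine ⟨by simp [ptSet], by simp [ptSet], by simp [pB, pE], fun r hr hrect => ?_⟩
  simp only [ptSet, Finset.mem_insert, Finset.mem_singleton] at hr
  rcases hr with rfl | rfl | rfl | rfl | rfl
  · have := inner_nonpos_of_mem_RectRot hrect
    norm_num [pA, pB, pE] at this
  · exact Or.inl rfl
  · have := inner_nonpos_of_mem_RectRot hrect
    norm_num [pB, pC, pE] at this
  · exact absurd (sin_mul_cos_eq_zero_of_mem_RectRot (by simp [pB, pD]) (by simp [pE, pD])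
      (by simp [pB, pD]) (by simp [pE, pD]) hrect) hθ
  · exact Or.inr rfl

lemma graph0_subset_or_graphPiDivFour_subset {θ : ℝ} {E : Finset (Sym2 Pt)}
    (hE : ∀ a b : Pt, s(a, b) ∈ E ↔ RIGrotAdj θ ptSet a b) :
    graph0 ⊆ E ∨ graphPiDivFour ⊆ E := by
  have hAE := (hE _ _).2 (RIGrotAdj_pA_pE θ)
  have hBC := (hE _ _).2 (RIGrotAdj_pB_pC θ)
  have hBD := (hE _ _).2 (RIGrotAdj_pB_pD θ)
  have hDE := (hE _ _).2 (RIGrotAdj_pD_pE θ)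
  by_cases hB : pB ∈ RectRot θ pC pE
  · have hθ := sin_mul_cos_ne_zero_of_pB_mem hB
    right
    simp only [graphPiDivFour, Finset.insert_subset_iff, Finset.singleton_subset_iff]
    exact ⟨(hE _ _).2 (RIGrotAdj_pA_pD hθ), hAE, hBC, hBD, (hE _ _).2 (RIGrotAdj_pB_pE hθ), hDE⟩
  · left
    simp only [graph0, Finset.insert_subset_iff, Finset.singleton_subset_iff]
    exact ⟨hAE, hBC, hBD, (hE _ _).2 (RIGrotAdj_pC_pE hB), hDE⟩

/- For the two fixed angles adjacency is a finite numeric check: each non-edge has a third point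
of `ptSet` in its rectangle. -/
lemma mem_graph0_iff (a b : Pt) : s(a, b) ∈ graph0 ↔ RIGrotAdj 0 ptSet a b := by
  rw [RIGrotAdj, RectRot_eq_Rect (by simp)]
  constructor
  · intro h
    simp only [graph0, Finset.mem_insert, Finset.mem_singleton, Sym2.eq_iff] at h
    rcases h with (⟨rfl, rfl⟩ | ⟨rfl, rfl⟩) | (⟨rfl, rfl⟩ | ⟨rfl, rfl⟩) | (⟨rfl, rfl⟩ | ⟨rfl, rfl⟩) |
      (⟨rfl, rfl⟩ | ⟨rfl, rfl⟩) | (⟨rfl, rfl⟩ | ⟨rfl, rfl⟩) <;>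
    norm_num [ptSet, mem_Rect_iff, pA, pB, pC, pD, pE]
  · rintro ⟨ha, hb, hab, hvis⟩
    simp only [ptSet, Finset.mem_insert, Finset.mem_singleton] at ha hb
    rcases ha with rfl | rfl | rfl | rfl | rfl <;> rcases hb with rfl | rfl | rfl | rfl | rfl <;>
    first
    | exact absurd rfl hab
    | (simp [graph0]; done)
    | norm_num [ptSet, mem_Rect_iff, pA, pB, pC, pD, pE] at hvis

lemma mem_graphPiDivFour_iff (a b : Pt) :
    s(a, b) ∈ graphPiDivFour ↔ RIGrotAdj (π / 4) ptSet a b := by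
  constructor
  · intro h
    simp only [graphPiDivFour, Finset.mem_insert, Finset.mem_singleton, Sym2.eq_iff] at h
    rcases h with (⟨rfl, rfl⟩ | ⟨rfl, rfl⟩) | (⟨rfl, rfl⟩ | ⟨rfl, rfl⟩) | (⟨rfl, rfl⟩ | ⟨rfl, rfl⟩) |
      (⟨rfl, rfl⟩ | ⟨rfl, rfl⟩) | (⟨rfl, rfl⟩ | ⟨rfl, rfl⟩) | (⟨rfl, rfl⟩ | ⟨rfl, rfl⟩) <;>
    norm_num [RIGrotAdj, ptSet, mem_RectRot_pi_div_four_iff, pA, pB, pC, pD, pE]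
  · rintro ⟨ha, hb, hab, hvis⟩
    simp only [ptSet, Finset.mem_insert, Finset.mem_singleton] at ha hb
    rcases ha with rfl | rfl | rfl | rfl | rfl <;> rcases hb with rfl | rfl | rfl | rfl | rfl <;>
    first
    | exact absurd rfl hab
    | (simp [graphPiDivFour]; done)
    | norm_num [ptSet, mem_RectRot_pi_div_four_iff, pA, pB, pC, pD, pE] at hvis

lemma card_graph0 : graph0.card = 5 := by
  simp [graph0, pA, pB, pC, pD, pE]

lemma card_graphPiDivFour : graphPiDivFour.card = 6 := by
  simp [graphPiDivFour, pA, pB, pC, pD, pE]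

lemma cost_graph0 : cost graph0 = 10 + √5 := by
  simp [cost, graph0, pA, pB, pC, pD, pE, Finset.sum_insert, dist_toLp_fin_two]
  norm_num
  ring

lemma cost_graphPiDivFour : cost graphPiDivFour = 5 + √2 + √5 + √10 := by
  simp [cost, graphPiDivFour, pA, pB, pC, pD, pE, Finset.sum_insert, dist_toLp_fin_two]
  norm_num
  ring

lemma cost_graphPiDivFour_lt_cost_graph0 : cost graphPiDivFour < cost graph0 := by
  have h2 : √2 < 3 / 2 := by rw [sqrt_lt' (by norm_num)]; norm_num
  have h10 : √10 < 16 / 5 := by rw [sqrt_lt' (by norm_num)]; norm_num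
  rw [cost_graphPiDivFour, cost_graph0]
  linarith

lemma cost_graphPiDivFour_le {θ : ℝ} {E : Finset (Sym2 Pt)}
    (hE : ∀ a b : Pt, s(a, b) ∈ E ↔ RIGrotAdj θ ptSet a b) : cost graphPiDivFour ≤ cost E := by
  rcases graph0_subset_or_graphPiDivFour_subset hE with h | h
  · exact cost_graphPiDivFour_lt_cost_graph0.le.trans (cost_mono h)
  · exact cost_mono h

lemma card_graph0_le {θ : ℝ} {E : Finset (Sym2 Pt)}
    (hE : ∀ a b : Pt, s(a, b) ∈ E ↔ RIGrotAdj θ ptSet a b) : graph0.card ≤ E.card := by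
  rcases graph0_subset_or_graphPiDivFour_subset hE with h | h
  · exact Finset.card_le_card h
  · calc graph0.card = 5 := card_graph0
      _ ≤ graphPiDivFour.card := by rw [card_graphPiDivFour]; norm_num
      _ ≤ E.card := Finset.card_le_card h

/-- there is a point set for which the minimum-cost uniform 2D-monotone
spanning graph and the one with the fewest edges are different graphs (attained at
different rotations). -/
theorem min_cost_and_min_edges_uniform_graphs_differ :
    ∃ P : Finset Pt,
      (∃ (θc : ℝ) (Ec : Finset (Sym2 Pt)),
        (∀ a b : Pt, s(a, b) ∈ Ec ↔ RIGrotAdj θc P a b) ∧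
        (∀ (θ : ℝ) (E : Finset (Sym2 Pt)),
          (∀ a b : Pt, s(a, b) ∈ E ↔ RIGrotAdj θ P a b) → cost Ec ≤ cost E)) ∧
      (∃ (θe : ℝ) (Ee : Finset (Sym2 Pt)),
        (∀ a b : Pt, s(a, b) ∈ Ee ↔ RIGrotAdj θe P a b) ∧
        (∀ (θ : ℝ) (E : Finset (Sym2 Pt)),
          (∀ a b : Pt, s(a, b) ∈ E ↔ RIGrotAdj θ P a b) → Ee.card ≤ E.card)) ∧
      (∀ (θc : ℝ) (Ec : Finset (Sym2 Pt)) (θe : ℝ) (Ee : Finset (Sym2 Pt)),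
        (∀ a b : Pt, s(a, b) ∈ Ec ↔ RIGrotAdj θc P a b) →
        (∀ (θ : ℝ) (E : Finset (Sym2 Pt)),
          (∀ a b : Pt, s(a, b) ∈ E ↔ RIGrotAdj θ P a b) → cost Ec ≤ cost E) →
        (∀ a b : Pt, s(a, b) ∈ Ee ↔ RIGrotAdj θe P a b) →
        (∀ (θ : ℝ) (E : Finset (Sym2 Pt)),
          (∀ a b : Pt, s(a, b) ∈ E ↔ RIGrotAdj θ P a b) → Ee.card ≤ E.card) →
        Ec ≠ Ee) := by
  refine ⟨ptSet,
    ⟨π / 4, graphPiDivFour, mem_graphPiDivFour_iff, fun _ _ hE => cost_graphPiDivFour_le hE⟩,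
    ⟨0, graph0, mem_graph0_iff, fun _ _ hE => card_graph0_le hE⟩, ?_⟩
  rintro _ Ec _ _ hEc hcost - hcard rfl
  rcases graph0_subset_or_graphPiDivFour_subset hEc with h | h
  · have := hcost _ _ mem_graphPiDivFour_iff
    linarith [cost_mono h, cost_graphPiDivFour_lt_cost_graph0]
  · have := (Finset.card_le_card h).trans (hcard _ _ mem_graph0_iff)
    rw [card_graphPiDivFour, card_graph0] at this
    omega

end
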